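/- Let p ≥ 1 and β > 0, let Λ ⊂ ℤ² be finite with zero boundary condition, and let γ₁,…,γ_m be contours with Λ_{γ_i} ⊆ Λ whose interiors Λ_{γ_i} are pairwise disjoint and such that for all i ≠ j the exterior boundary ∂⁻_{γ_i} is disjoint from Λ_{γ_j}. Then for all integers h₁,…,h_m, hatπ^{p,0}_Λ(∩_{i=1}^m C_{γ_i,h_i}) ≤ exp(−β Σ_{i=1}^m |γ_i|). -/

import Mathlib

open scoped BigOperators Classical

noncomputable section

namespace PSOS

/-- Sites of the square lattice `ℤ²`. -/
abbrev Site : Type := ℤ × ℤ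

/-- The nearest-neighbour edges incident to `x`, each written in its normalized
(right/up oriented) form, so that every unordered pair appears in a unique way. -/
def edgesAt (x : Site) : Finset (Site × Site) :=
  {(x, (x.1 + 1, x.2)), (x, (x.1, x.2 + 1)),
   ((x.1 - 1, x.2), x), ((x.1, x.2 - 1), x)}

/-- Nearest-neighbour edges of `ℤ²` with at least one endpoint in `Λ`,
each unordered pair appearing exactly once. -/
def edges (Λ : Finset Site) : Finset (Site × Site) := Λ.biUnion edgesAt

/-- Extension `ξ` of a configuration `η : Λ → ℤ` by the boundary condition `φ` off `Λ`. -/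
def extend (Λ : Finset Site) (φ : Site → ℤ) (η : Λ → ℤ) : Site → ℤ :=
  fun x => if h : x ∈ Λ then η ⟨x, h⟩ else φ x

/-- The `p`-SOS Hamiltonian `H^{p,φ}_Λ` on `Λ` with boundary condition `φ`. -/
def ham (p : ℝ) (Λ : Finset Site) (φ : Site → ℤ) (η : Λ → ℤ) : ℝ :=
  ∑ e ∈ edges Λ, (|extend Λ φ η e.1 - extend Λ φ η e.2| : ℝ) ^ p

/-- Boltzmann weight `exp(-β H^{p,φ}_Λ(η))`. -/
def weight (p β : ℝ) (Λ : Finset Site) (φ : Site → ℤ) (η : Λ → ℤ) : ℝ :=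
  Real.exp (-β * ham p Λ φ η)

/-- Finite-volume Gibbs probability `hatπ^{p,φ}_Λ(A)` of an event `A ⊆ ℤ^Λ`. -/
def gibbs (p β : ℝ) (Λ : Finset Site) (φ : Site → ℤ) (A : Set (Λ → ℤ)) : ℝ :=
  (∑' η : A, weight p β Λ φ η) / (∑' η : (Λ → ℤ), weight p β Λ φ η)

/-- Gibbs expectation of an observable under `hatπ^{p,φ}_Λ`. -/
def gibbsExp (p β : ℝ) (Λ : Finset Site) (φ : Site → ℤ) (f : (Λ → ℤ) → ℝ) : ℝ :=
  (∑' η : (Λ → ℤ), f η * weight p β Λ φ η) / (∑' η : (Λ → ℤ), weight p β Λ φ η)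

/-- The floor event `{η : η_x ≥ 0 for all x ∈ Λ}`. -/
def floorSet (Λ : Finset Site) : Set (Λ → ℤ) := {η | ∀ x, 0 ≤ η x}

/-- The event `{η : 0 ≤ η_x ≤ n for all x ∈ Λ}` (floor at `0`, ceiling at `n`). -/
def boxSet (Λ : Finset Site) (n : ℕ) : Set (Λ → ℤ) :=
  {η | ∀ x, 0 ≤ η x ∧ η x ≤ (n : ℤ)}

/-- `barπ^{p,0}_Λ`: the Gibbs measure with zero boundary condition conditioned
on the floor event. -/
def barGibbs (p β : ℝ) (Λ : Finset Site) (A : Set (Λ → ℤ)) : ℝ :=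
  gibbs p β Λ 0 (A ∩ floorSet Λ) / gibbs p β Λ 0 (floorSet Λ)

/-- `π^{p,0}_Λ`: the Gibbs measure with zero boundary condition conditioned on
having floor at `0` and ceiling at `n`. -/
def ceilGibbs (p β : ℝ) (Λ : Finset Site) (n : ℕ) (A : Set (Λ → ℤ)) : ℝ :=
  gibbs p β Λ 0 (A ∩ boxSet Λ n) / gibbs p β Λ 0 (boxSet Λ n)

/-- The nearest-neighbour graph on `ℤ²`. -/
def nbrGraph : SimpleGraph Site where
  Adj x y := (x.1 - y.1).natAbs + (x.2 - y.2).natAbs = 1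
  symm := ⟨fun x y (hxy : (x.1 - y.1).natAbs + (x.2 - y.2).natAbs = 1) =>
    show (y.1 - x.1).natAbs + (y.2 - x.2).natAbs = 1 by omega⟩
  loopless := ⟨fun x (h : (x.1 - x.1).natAbs + (x.2 - x.2).natAbs = 1) => by omega⟩

/-- The four nearest neighbours of a site. -/
def nbrs (x : Site) : Finset Site :=
  {(x.1 + 1, x.2), (x.1 - 1, x.2), (x.1, x.2 + 1), (x.1, x.2 - 1)}

/-- A contour `γ` of the dual lattice `(ℤ²)*`, identified with the finite region
`Λ_γ ⊆ ℤ²` of sites it encloses: the region is nonempty and connected with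
connected complement, so that its edge boundary is a single closed dual circuit
(consistently with the standard linking rule at dual vertices). -/
structure Contour where
  interior : Finset Site
  nonempty : interior.Nonempty
  conn : (nbrGraph.induce (interior : Set Site)).Connected
  coconn : (nbrGraph.induce ((interior : Set Site)ᶜ)).Connected

/-- The nearest-neighbour edges crossing the boundary of `S`, oriented from
inside to outside; these correspond to the bonds of the dual circuit bounding `S`. -/
def bdryEdges (S : Finset Site) : Finset (Site × Site) :=
  S.biUnion fun x => ((nbrs x).filter fun y => y ∉ S).image fun y => (x, y)

/-- `|γ|`: the number of bonds of the contour `γ`. -/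
def Contour.len (γ : Contour) : ℕ := (bdryEdges γ.interior).card

/-- `∂⁺_γ`: sites of the interior adjacent to the exterior. -/
def innerBdry (S : Finset Site) : Finset Site :=
  S.filter fun x => ∃ y ∈ nbrs x, y ∉ S

/-- `∂⁻_γ`: sites of the exterior adjacent to the interior. -/
def outerBdry (S : Finset Site) : Finset Site :=
  (S.biUnion nbrs).filter fun y => y ∉ S

/-- The event `C_{γ,h}` that `γ` is an `h`-contour: the extended configuration `ξ`
is at least `h` on `∂⁺_γ` and at most `h - 1` on `∂⁻_γ`. -/
def contourEvent (Λ : Finset Site) (φ : Site → ℤ) (γ : Contour) (h : ℤ) :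
    Set (Λ → ℤ) :=
  {η | (∀ x ∈ innerBdry γ.interior, h ≤ extend Λ φ η x) ∧
       (∀ y ∈ outerBdry γ.interior, extend Λ φ η y ≤ h - 1)}

/-- The map `T_γ` lowering the configuration by `1` inside the contour `γ`. -/
def lower (Λ : Finset Site) (γ : Contour) (η : Λ → ℤ) : Λ → ℤ :=
  fun x => if (x : Site) ∈ γ.interior then η x - 1 else η x

/-- An event is increasing if it is upward closed for the pointwise order. -/
def IncrEvent (Λ : Finset Site) (E : Set (Λ → ℤ)) : Prop :=
  ∀ η η' : Λ → ℤ, (∀ x, η x ≤ η' x) → η ∈ E → η' ∈ E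

/- Peierls argument: lowering the configuration by one on the union `I` of the interiors is
injective, and on `⋂ i, C_{γ_i,h_i}` it lowers the energy of every bond leaving `I` by at
least one, since there `ξ` drops by at least one across the bond and `a ^ p + 1 ≤ (a + 1) ^ p`
for `a ≥ 0`, `p ≥ 1`. The hypotheses on the contours make the bonds leaving `I` exactly the
bonds of the `γ_i`, counted once each, so the Boltzmann weight gains a factor
`exp (-β ∑ i, |γ_i|)`. -/

lemma mem_nbrs {x y : Site} :
    y ∈ nbrs x ↔ y = (x.1 + 1, x.2) ∨ y = (x.1 - 1, x.2) ∨
      y = (x.1, x.2 + 1) ∨ y = (x.1, x.2 - 1) := by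
  simp [nbrs]

lemma mem_nbrs_comm {x y : Site} : y ∈ nbrs x ↔ x ∈ nbrs y := by
  simp only [mem_nbrs, Prod.ext_iff]
  omega

lemma snd_mem_nbrs_of_mem_edges {Λ : Finset Site} {e : Site × Site} (he : e ∈ edges Λ) :
    e.2 ∈ nbrs e.1 := by
  simp only [edges, edgesAt, Finset.mem_biUnion, Finset.mem_insert,
    Finset.mem_singleton] at he
  obtain ⟨x, -, rfl | rfl | rfl | rfl⟩ := he <;> simp [mem_nbrs, Prod.ext_iff]

/-- The orientation of a nearest-neighbour pair used in `edges`. -/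
def normE (e : Site × Site) : Site × Site :=
  if e.1.1 + e.1.2 ≤ e.2.1 + e.2.2 then e else (e.2, e.1)

lemma normE_eq_or_swap (e : Site × Site) : normE e = e ∨ normE e = (e.2, e.1) := by
  unfold normE; split <;> simp

lemma eq_or_swap_of_normE_eq {a b : Site × Site} (h : normE a = normE b) :
    a = b ∨ (a.1 = b.2 ∧ a.2 = b.1) := by
  rcases normE_eq_or_swap a with ha | ha <;> rcases normE_eq_or_swap b with hb | hb <;>
    rw [ha, hb] at h <;> simp only [Prod.ext_iff] at h ⊢ <;> tauto

lemma normE_mem_edges {Λ : Finset Site} {x y : Site} (hx : x ∈ Λ) (hy : y ∈ nbrs x) :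
    normE (x, y) ∈ edges Λ := by
  refine Finset.mem_biUnion.2 ⟨x, hx, ?_⟩
  rw [mem_nbrs] at hy
  unfold normE
  rcases hy with rfl | rfl | rfl | rfl <;> dsimp only <;> split <;>
    first | omega | simp [edgesAt]

lemma mem_bdryEdges {S : Finset Site} {e : Site × Site} :
    e ∈ bdryEdges S ↔ e.1 ∈ S ∧ e.2 ∈ nbrs e.1 ∧ e.2 ∉ S := by
  simp only [bdryEdges, Finset.mem_biUnion, Finset.mem_image, Finset.mem_filter]
  constructor
  · rintro ⟨x, hx, y, ⟨hy, hyS⟩, rfl⟩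
    exact ⟨hx, hy, hyS⟩
  · rintro ⟨h1, h2, h3⟩
    exact ⟨e.1, h1, e.2, ⟨h2, h3⟩, rfl⟩

lemma card_bdryEdges_le_card_crossing {Λ S : Finset Site} (hS : S ⊆ Λ) :
    (bdryEdges S).card ≤ ((edges Λ).filter fun e => Xor (e.1 ∈ S) (e.2 ∈ S)).card := by
  refine Finset.card_le_card_of_injOn normE (fun a ha => ?_) fun a ha b hb hab => ?_
  · obtain ⟨h1, h2, h3⟩ := mem_bdryEdges.1 ha
    refine Finset.mem_filter.2 ⟨normE_mem_edges (hS h1) h2, ?_⟩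
    rcases normE_eq_or_swap a with h | h <;> rw [h] <;> simp [Xor, h1, h3]
  · rw [Finset.mem_coe, mem_bdryEdges] at ha hb
    rcases eq_or_swap_of_normE_eq hab with h | ⟨h, -⟩
    · exact h
    · exact absurd (h ▸ ha.1) hb.2.2

section Contours

variable {m : ℕ} {γ : Fin m → Contour}

def interiors (γ : Fin m → Contour) : Finset Site :=
  Finset.univ.biUnion fun i => (γ i).interior

lemma mem_interiors {z : Site} : z ∈ interiors γ ↔ ∃ i, z ∈ (γ i).interior := by
  simp [interiors]

lemma notMem_interiors_of_mem_outerBdry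
    (hext : ∀ i j, i ≠ j → Disjoint (outerBdry (γ i).interior) (γ j).interior)
    {i : Fin m} {y : Site} (hy : y ∈ outerBdry (γ i).interior) : y ∉ interiors γ := by
  intro hyI
  obtain ⟨j, hj⟩ := mem_interiors.1 hyI
  by_cases hij : i = j
  · exact (Finset.mem_filter.1 hy).2 (hij ▸ hj)
  · exact Finset.disjoint_left.1 (hext i j hij) hy hj

lemma card_bdryEdges_interiors
    (hdisj : ∀ i j, i ≠ j → Disjoint (γ i).interior (γ j).interior)
    (hext : ∀ i j, i ≠ j → Disjoint (outerBdry (γ i).interior) (γ j).interior) :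
    (bdryEdges (interiors γ)).card = ∑ i, (γ i).len := by
  have hunion : bdryEdges (interiors γ) =
      Finset.univ.biUnion fun i => bdryEdges (γ i).interior := by
    ext e
    simp only [Finset.mem_biUnion, Finset.mem_univ, true_and, mem_bdryEdges, mem_interiors]
    constructor
    · rintro ⟨⟨i, hi⟩, hnbr, hout⟩
      exact ⟨i, hi, hnbr, fun h => hout ⟨i, h⟩⟩
    · rintro ⟨i, hi, hnbr, hout⟩
      exact ⟨⟨i, hi⟩, hnbr, mem_interiors.not.1 <| notMem_interiors_of_mem_outerBdry hext
        (Finset.mem_filter.2 ⟨Finset.mem_biUnion.2 ⟨e.1, hi, hnbr⟩, hout⟩)⟩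
  rw [hunion, Finset.card_biUnion fun i _ j _ hij => Finset.disjoint_left.2 fun e hi hj =>
    Finset.disjoint_left.1 (hdisj i j hij) (mem_bdryEdges.1 hi).1 (mem_bdryEdges.1 hj).1]
  rfl

lemma extend_lt_of_mem_iInter_contourEvent {Λ : Finset Site} {φ : Site → ℤ}
    {h : Fin m → ℤ} {η : Λ → ℤ} (hη : η ∈ ⋂ i, contourEvent Λ φ (γ i) (h i)) :
    ∀ x ∈ interiors γ, ∀ y ∉ interiors γ, y ∈ nbrs x → extend Λ φ η y < extend Λ φ η x := by
  intro x hx y hy hxy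
  obtain ⟨i, hi⟩ := mem_interiors.1 hx
  have hyi : y ∉ (γ i).interior := fun h => hy (mem_interiors.2 ⟨i, h⟩)
  obtain ⟨hinner, houter⟩ := Set.mem_iInter.1 hη i
  have hhx := hinner x (Finset.mem_filter.2 ⟨hi, y, hxy, hyi⟩)
  have hyh := houter y (Finset.mem_filter.2 ⟨Finset.mem_biUnion.2 ⟨x, hi, hxy⟩, hyi⟩)
  omega

end Contours

def lowerOn (Λ S : Finset Site) (η : Λ → ℤ) : Λ → ℤ :=
  fun x => if (x : Site) ∈ S then η x - 1 else η x

lemma lowerOn_injective (Λ S : Finset Site) : Function.Injective (lowerOn Λ S) := by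
  intro η η' hη
  funext x
  have := congrFun hη x
  unfold lowerOn at this
  split at this <;> omega

lemma extend_lowerOn {Λ S : Finset Site} (hS : S ⊆ Λ) (φ : Site → ℤ) (η : Λ → ℤ)
    (z : Site) :
    extend Λ φ (lowerOn Λ S η) z = extend Λ φ η z - if z ∈ S then 1 else 0 := by
  by_cases hz : z ∈ Λ
  · simp only [extend, lowerOn, dif_pos hz]
    split <;> ring
  · have hzS : z ∉ S := fun h => hz (hS h)
    simp [extend, hz, hzS]

lemma abs_sub_one_sub_rpow_add_one_le {p : ℝ} (hp : 1 ≤ p) {a b : ℝ} (hab : b + 1 ≤ a) :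
    |a - 1 - b| ^ p + 1 ≤ |a - b| ^ p := by
  rw [abs_of_nonneg (by linarith), abs_of_nonneg (by linarith)]
  simpa [sub_right_comm] using
    Real.add_rpow_le_rpow_add (by linarith : 0 ≤ a - 1 - b) zero_le_one hp

section Lowering

variable {p : ℝ} {Λ S : Finset Site} {φ : Site → ℤ} {η : Λ → ℤ}

lemma abs_sub_rpow_lowerOn_add_le (hp : 1 ≤ p) (hS : S ⊆ Λ)
    (hstep : ∀ x ∈ S, ∀ y ∉ S, y ∈ nbrs x → extend Λ φ η y < extend Λ φ η x)
    {x y : Site} (hxy : y ∈ nbrs x) :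
    (|extend Λ φ (lowerOn Λ S η) x - extend Λ φ (lowerOn Λ S η) y| : ℝ) ^ p
        + (if Xor (x ∈ S) (y ∈ S) then 1 else 0)
      ≤ (|extend Λ φ η x - extend Λ φ η y| : ℝ) ^ p := by
  have hdrop : ∀ x ∈ S, ∀ y ∉ S, y ∈ nbrs x →
      (extend Λ φ η y : ℝ) + 1 ≤ extend Λ φ η x := fun x hx y hy hxy => by
    exact_mod_cast hstep x hx y hy hxy
  rw [extend_lowerOn hS, extend_lowerOn hS]
  by_cases hx : x ∈ S <;> by_cases hy : y ∈ S
  · simp [hx, hy, Xor]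
  · simpa [hx, hy, Xor] using abs_sub_one_sub_rpow_add_one_le hp (hdrop x hx y hy hxy)
  · have hyx := abs_sub_one_sub_rpow_add_one_le hp (hdrop y hy x hx (mem_nbrs_comm.1 hxy))
    rw [abs_sub_comm, abs_sub_comm (extend Λ φ η y : ℝ)] at hyx
    simpa [hx, hy, Xor, sub_sub_eq_add_sub, add_sub_right_comm] using hyx
  · simp [hx, hy, Xor]

lemma ham_lowerOn_add_card_bdryEdges_le (hp : 1 ≤ p) (hS : S ⊆ Λ)
    (hstep : ∀ x ∈ S, ∀ y ∉ S, y ∈ nbrs x → extend Λ φ η y < extend Λ φ η x) :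
    ham p Λ φ (lowerOn Λ S η) + (bdryEdges S).card ≤ ham p Λ φ η := by
  calc ham p Λ φ (lowerOn Λ S η) + (bdryEdges S).card
      ≤ ham p Λ φ (lowerOn Λ S η)
          + ((edges Λ).filter fun e => Xor (e.1 ∈ S) (e.2 ∈ S)).card := by
        exact add_le_add le_rfl (by exact_mod_cast card_bdryEdges_le_card_crossing hS)
    _ = ∑ e ∈ edges Λ, ((|extend Λ φ (lowerOn Λ S η) e.1
          - extend Λ φ (lowerOn Λ S η) e.2| : ℝ) ^ p
            + if Xor (e.1 ∈ S) (e.2 ∈ S) then 1 else 0) := by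
        rw [Finset.sum_add_distrib, Finset.sum_boole]
        rfl
    _ ≤ ham p Λ φ η := Finset.sum_le_sum fun e he =>
        abs_sub_rpow_lowerOn_add_le hp hS hstep (snd_mem_nbrs_of_mem_edges he)

end Lowering

section Gibbs

variable {p β : ℝ} {Λ : Finset Site} {φ : Site → ℤ}

lemma weight_le_exp_mul_weight (hβ : 0 ≤ β) {η η' : Λ → ℤ} {L : ℝ}
    (hham : ham p Λ φ η' + L ≤ ham p Λ φ η) :
    weight p β Λ φ η ≤ Real.exp (-β * L) * weight p β Λ φ η' := by
  rw [weight, weight, ← Real.exp_add, Real.exp_le_exp]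
  nlinarith

lemma gibbs_le_of_injective {A : Set (Λ → ℤ)} {c : ℝ} (hc : 0 ≤ c)
    (T : (Λ → ℤ) → Λ → ℤ) (hT : Function.Injective T)
    (hw : ∀ η ∈ A, weight p β Λ φ η ≤ c * weight p β Λ φ (T η)) :
    gibbs p β Λ φ A ≤ c := by
  have hpos : ∀ η, 0 < weight p β Λ φ η := fun η => Real.exp_pos _
  unfold gibbs
  by_cases hS : Summable (weight p β Λ φ)
  · rw [div_le_iff₀ (hS.tsum_pos (fun η => (hpos η).le) 0 (hpos 0)), ← tsum_mul_left]
    exact (hS.subtype A).tsum_le_tsum_of_inj (fun η => T η) (hT.comp Subtype.val_injective)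
      (fun η _ => mul_nonneg hc (hpos η).le) (fun η => hw η η.2) (hS.mul_left c)
  · rw [tsum_eq_zero_of_not_summable hS, div_zero]
    exact hc

end Gibbs

/-- Peierls bound for several disjoint contours: if the interiors
`Λ_{γ_i}` are pairwise disjoint and the exterior boundary `∂⁻_{γ_i}` of each
contour is disjoint from the interior of every other, then
`hatπ^{p,0}_Λ(∩_i C_{γ_i,h_i}) ≤ exp(-β Σ_i |γ_i|)`. -/
theorem statement_4 (p β : ℝ) (hp : 1 ≤ p) (hβ : 0 < β)
    (Λ : Finset Site) (m : ℕ) (γ : Fin m → Contour) (h : Fin m → ℤ)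
    (hsub : ∀ i, (γ i).interior ⊆ Λ)
    (hdisj : ∀ i j, i ≠ j → Disjoint (γ i).interior (γ j).interior)
    (hext : ∀ i j, i ≠ j → Disjoint (outerBdry (γ i).interior) (γ j).interior) :
    gibbs p β Λ 0 (⋂ i, contourEvent Λ 0 (γ i) (h i)) ≤
      Real.exp (-β * ∑ i, ((γ i).len : ℝ)) := by
  have hI : interiors γ ⊆ Λ := Finset.biUnion_subset.2 fun i _ => hsub i
  refine gibbs_le_of_injective (Real.exp_pos _).le (lowerOn Λ (interiors γ))
    (lowerOn_injective Λ _) fun η hη => weight_le_exp_mul_weight hβ.le ?_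
  have hham := ham_lowerOn_add_card_bdryEdges_le hp hI (extend_lt_of_mem_iInter_contourEvent hη)
  rwa [card_bdryEdges_interiors hdisj hext, Nat.cast_sum] at hham

end PSOS
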